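/- arXiv:1512.01290 — 2 statements merged into one kernel-verified Lean document; each statement's English description precedes it below -/
import Mathlib

section
/- Define R_c(n, ρ') = 1 / (1 + (θ_b/π) (2^{ρ'/n} - 1)^{1/2} (nπ/2 - arctan((2^{ρ'/n} - 1)^{-1/2}))) for ρ' > 0, n ∈ {1, 2}, θ_b ∈ (0, π]. Then R_c(2, ρ') / R_c(1, ρ') → ∞ as ρ' → ∞. In particular, there exists ρ₀ such that for all ρ' > ρ₀, R_c(2, ρ') > R_c(1, ρ'): for high target rates, sharing spectrum licenses between two operators yields strictly higher rate coverage than exclusive licenses. -/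
open Real Filter

noncomputable def Rc (θb : ℝ) (n : ℝ) (ρ' : ℝ) : ℝ :=
  1 / (1 + (θb / π) * (2 ^ (ρ' / n) - 1) ^ ((1:ℝ)/2) *
    (n * π / 2 - Real.arctan ((2 ^ (ρ' / n) - 1) ^ (-(1:ℝ)/2))))

theorem sharing_beats_exclusive_at_high_rate
    (θb : ℝ) (hθb : 0 < θb) (hθb' : θb ≤ π) :
    Tendsto (fun ρ' => Rc θb 2 ρ' / Rc θb 1 ρ') atTop atTop ∧
    ∃ ρ₀ : ℝ, ∀ ρ' : ℝ, ρ₀ < ρ' → Rc θb 1 ρ' < Rc θb 2 ρ' := by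
  have hπ : (0:ℝ) < π := Real.pi_pos
  set c : ℝ := θb / π with hc
  have hcpos : 0 < c := div_pos hθb hπ
  have hcπ : c * π = θb := div_mul_cancel₀ θb hπ.ne'
  set K : ℝ := (θb / 4) / (1 + θb) with hK
  have hKpos : 0 < K := div_pos (by linarith) (by linarith)
  -- Key pointwise bound for ρ' ≥ 2
  have key : ∀ ρ' : ℝ, 2 ≤ ρ' →
      K * (2:ℝ) ^ (ρ' / 4) ≤ Rc θb 2 ρ' / Rc θb 1 ρ' ∧ 0 < Rc θb 1 ρ' := by
    intro ρ' hρ'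
    set a : ℝ := (2:ℝ) ^ (ρ' / 2) with haa
    have ha2 : 2 ≤ a := by
      calc (2:ℝ) = 2 ^ (1:ℝ) := (Real.rpow_one 2).symm
        _ ≤ a := Real.rpow_le_rpow_of_exponent_le one_le_two (by linarith)
    have haq : (2:ℝ) ^ ρ' = a * a := by
      rw [haa, ← Real.rpow_add two_pos]
      ring_nf
    set s : ℝ := (a - 1) ^ ((1:ℝ)/2) with hs
    set t : ℝ := (a + 1) ^ ((1:ℝ)/2) with ht
    have hs1 : 1 ≤ s := by
      calc (1:ℝ) = (1:ℝ) ^ ((1:ℝ)/2) := (Real.one_rpow _).symm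
        _ ≤ s := Real.rpow_le_rpow (by norm_num) (by linarith) (by norm_num)
    have ht1 : 1 ≤ t := by
      calc (1:ℝ) = (1:ℝ) ^ ((1:ℝ)/2) := (Real.one_rpow _).symm
        _ ≤ t := Real.rpow_le_rpow (by norm_num) (by linarith) (by norm_num)
    have hspos : 0 < s := lt_of_lt_of_le one_pos hs1
    have htpos : 0 < t := lt_of_lt_of_le one_pos ht1
    have hstpos : 0 < s * t := mul_pos hspos htpos
    have hfac : (2:ℝ) ^ ρ' - 1 = (a - 1) * (a + 1) := by rw [haq]; ring
    have hst : ((2:ℝ) ^ ρ' - 1) ^ ((1:ℝ)/2) = s * t := by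
      rw [hfac, Real.mul_rpow (by linarith) (by linarith)]
    have hneg : (-(1:ℝ)/2) = -((1:ℝ)/2) := by ring
    have hstInv : ((2:ℝ) ^ ρ' - 1) ^ (-(1:ℝ)/2) = (s * t)⁻¹ := by
      rw [hneg, Real.rpow_neg (by rw [hfac]; nlinarith), hst]
    have hsInv : ((2:ℝ) ^ (ρ' / 2) - 1) ^ (-(1:ℝ)/2) = s⁻¹ := by
      rw [hneg, Real.rpow_neg (by linarith), ← haa, ← hs]
    -- rewrite the two coverage probabilities
    have hRc1 : Rc θb 1 ρ' = 1 / (1 + c * (s * t) * Real.arctan (s * t)) := by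
      unfold Rc
      rw [div_one, hst, hstInv, Real.arctan_inv_of_pos hstpos]
      rw [hc]
      ring_nf
    have hRc2 : Rc θb 2 ρ' =
        1 / (1 + c * s * (π / 2 + Real.arctan s)) := by
      unfold Rc
      rw [hsInv, Real.arctan_inv_of_pos hspos, ← haa, ← hs]
      rw [hc]
      ring_nf
    set D1 : ℝ := 1 + c * (s * t) * Real.arctan (s * t) with hD1
    set D2 : ℝ := 1 + c * s * (π / 2 + Real.arctan s) with hD2
    have harc1 : π / 4 ≤ Real.arctan (s * t) := by
      rw [← Real.arctan_one]
      have h1t : (1:ℝ) ≤ s * t := by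
        calc (1:ℝ) = 1 * 1 := by norm_num
          _ ≤ s * t := mul_le_mul hs1 ht1 (by norm_num) (by linarith)
      exact Real.arctan_strictMono.monotone h1t
    have harcs : π / 4 ≤ Real.arctan s := by
      rw [← Real.arctan_one]
      exact Real.arctan_strictMono.monotone hs1
    have harcs' : Real.arctan s ≤ π / 2 := (Real.arctan_lt_pi_div_two s).le
    have hD1pos : 0 < D1 := by
      have h0 : 0 ≤ c * (s * t) * Real.arctan (s * t) :=
        mul_nonneg (mul_nonneg hcpos.le hstpos.le) (by linarith)
      rw [hD1]; linarith
    have hD2pos : 0 < D2 := by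
      have h0 : 0 ≤ c * s * (π / 2 + Real.arctan s) :=
        mul_nonneg (mul_nonneg hcpos.le hspos.le) (by linarith)
      rw [hD2]; linarith
    have hb1 : θb / 4 * (s * t) ≤ D1 := by
      have h1 : c * (s * t) * (π / 4) ≤ c * (s * t) * Real.arctan (s * t) :=
        mul_le_mul_of_nonneg_left harc1 (mul_nonneg hcpos.le hstpos.le)
      have h2 : θb / 4 * (s * t) = c * (s * t) * (π / 4) := by rw [← hcπ]; ring
      rw [hD1]; linarith
    have hb2 : D2 ≤ (1 + θb) * s := by
      have h1 : c * s * (π / 2 + Real.arctan s) ≤ c * s * π :=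
        mul_le_mul_of_nonneg_left (by linarith) (mul_nonneg hcpos.le hspos.le)
      have h2 : c * s * π = θb * s := by rw [← hcπ]; ring
      have h3 : (1 + θb) * s = s + θb * s := by ring
      rw [hD2, h3]; linarith
    have hratio : Rc θb 2 ρ' / Rc θb 1 ρ' = D1 / D2 := by
      rw [hRc1, hRc2]
      field_simp
    have hdiv : (θb / 4 * (s * t)) / ((1 + θb) * s) ≤ D1 / D2 :=
      div_le_div₀ hD1pos.le hb1 hD2pos hb2
    have heq : (θb / 4 * (s * t)) / ((1 + θb) * s) = K * t := by
      rw [hK]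
      field_simp
    have htlb : (2:ℝ) ^ (ρ' / 4) ≤ t := by
      have h1 : (2:ℝ) ^ (ρ' / 4) = a ^ ((1:ℝ)/2) := by
        rw [haa, ← Real.rpow_mul two_pos.le]
        congr 1
        ring
      rw [h1, ht]
      exact Real.rpow_le_rpow (by linarith) (by linarith) (by norm_num)
    constructor
    · calc K * (2:ℝ) ^ (ρ' / 4) ≤ K * t := mul_le_mul_of_nonneg_left htlb hKpos.le
        _ = (θb / 4 * (s * t)) / ((1 + θb) * s) := heq.symm
        _ ≤ D1 / D2 := hdiv
        _ = Rc θb 2 ρ' / Rc θb 1 ρ' := hratio.symm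
    · rw [hRc1]
      positivity
  have hg : Tendsto (fun ρ' : ℝ => K * (2:ℝ) ^ (ρ' / 4)) atTop atTop := by
    apply Tendsto.const_mul_atTop hKpos
    have hexp : Tendsto (fun x : ℝ => (2:ℝ) ^ x) atTop atTop := by
      refine (Real.tendsto_exp_atTop.comp
        (tendsto_id.const_mul_atTop (Real.log_pos one_lt_two))).congr fun x => ?_
      exact (Real.rpow_def_of_pos two_pos x).symm
    exact hexp.comp (Tendsto.atTop_div_const (by norm_num) tendsto_id)
  have hT : Tendsto (fun ρ' => Rc θb 2 ρ' / Rc θb 1 ρ') atTop atTop := by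
    refine tendsto_atTop_mono' atTop ?_ hg
    filter_upwards [eventually_ge_atTop (2:ℝ)] with ρ' h
    exact (key ρ' h).1
  refine ⟨hT, ?_⟩
  have hev : ∀ᶠ ρ' : ℝ in atTop, Rc θb 1 ρ' < Rc θb 2 ρ' := by
    filter_upwards [hT.eventually_gt_atTop 1, eventually_ge_atTop (2:ℝ)] with ρ' h1 h2
    have hpos := (key ρ' h2).2
    exact (one_lt_div hpos).mp h1
  obtain ⟨N, hN⟩ := eventually_atTop.mp hev
  exact ⟨N, fun ρ' hρ' => hN ρ' hρ'.le⟩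
end

section
/- Define R_c(n, ρ') = 1 / (1 + (θ_b/π) (2^{ρ'/n} - 1)^{1/2} (nπ/2 - arctan((2^{ρ'/n} - 1)^{-1/2}))) for ρ' > 0 and θ_b ∈ (0, π]. Then there exists δ > 0 such that for all 0 < ρ' < δ, R_c(1, ρ') > R_c(2, ρ'): for sufficiently low target rates, exclusive licenses outperform shared licenses. -/
open Real

lemma arctan_nonneg' {x : ℝ} (hx : 0 ≤ x) : 0 ≤ Real.arctan x := by
  have := Real.arctan_strictMono.monotone hx
  simpa [Real.arctan_zero] using this

lemma arctan_le_self' {x : ℝ} (hx : 0 ≤ x) : Real.arctan x ≤ x := by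
  have h1 : 0 ≤ Real.arctan x := arctan_nonneg' hx
  have h2 := Real.arctan_lt_pi_div_two x
  have := Real.le_tan h1 h2
  rwa [Real.tan_arctan] at this

theorem exclusive_beats_sharing_at_low_rate
    (θb : ℝ) (hθb : 0 < θb) (hθb' : θb ≤ π) :
    ∃ δ : ℝ, 0 < δ ∧ ∀ ρ' : ℝ, 0 < ρ' → ρ' < δ → Rc θb 2 ρ' < Rc θb 1 ρ' := by
  have hπ : (0:ℝ) < π := Real.pi_pos
  refine ⟨1/2, by norm_num, ?_⟩
  intro ρ' hρ hρδ
  obtain ⟨b, hbdef⟩ : ∃ b : ℝ, b = 2 ^ (ρ'/2) - 1 := ⟨_, rfl⟩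
  obtain ⟨a, hadef⟩ : ∃ a : ℝ, a = 2 ^ ρ' - 1 := ⟨_, rfl⟩
  have hb0 : 0 < b := by
    have : (1:ℝ) < 2 ^ (ρ'/2) :=
      Real.one_lt_rpow_iff_of_pos (by norm_num) |>.mpr (Or.inl ⟨by norm_num, by linarith⟩)
    rw [hbdef]; exact sub_pos.mpr this
  have ha0 : 0 < a := by
    have : (1:ℝ) < 2 ^ ρ' :=
      Real.one_lt_rpow_iff_of_pos (by norm_num) |>.mpr (Or.inl ⟨by norm_num, hρ⟩)
    rw [hadef]; exact sub_pos.mpr this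
  have hab : a = b ^ 2 + 2 * b := by
    have h2 : (2:ℝ) ^ ρ' = ((2:ℝ) ^ (ρ'/2)) ^ (2:ℕ) := by
      rw [← Real.rpow_natCast ((2:ℝ) ^ (ρ'/2)) 2, ← Real.rpow_mul (by norm_num)]
      norm_num
    rw [hadef, hbdef, h2]; ring
  have hb14 : b ≤ 1/4 := by
    have h1 : (2:ℝ) ^ (ρ'/2) < (2:ℝ) ^ ((1:ℝ)/4) :=
      Real.rpow_lt_rpow_of_exponent_lt (by norm_num) (by linarith)
    have h2 : (2:ℝ) ^ ((1:ℝ)/4) ≤ 5/4 := by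
      by_contra h
      push_neg at h
      have h3 : ((5:ℝ)/4) ^ (4:ℕ) < ((2:ℝ) ^ ((1:ℝ)/4)) ^ (4:ℕ) :=
        pow_lt_pow_left₀ h (by norm_num) (by norm_num)
      rw [← Real.rpow_natCast ((2:ℝ) ^ ((1:ℝ)/4)) 4, ← Real.rpow_mul (by norm_num)] at h3
      norm_num at h3
    rw [hbdef]
    linarith
  obtain ⟨x₁, hx1def⟩ : ∃ x : ℝ, x = a ^ ((1:ℝ)/2) := ⟨_, rfl⟩
  obtain ⟨x₂, hx2def⟩ : ∃ x : ℝ, x = b ^ ((1:ℝ)/2) := ⟨_, rfl⟩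
  have hx1 : 0 < x₁ := hx1def ▸ Real.rpow_pos_of_pos ha0 _
  have hx2 : 0 < x₂ := hx2def ▸ Real.rpow_pos_of_pos hb0 _
  have hx1sq : x₁ * x₁ = a := by
    rw [hx1def, ← Real.rpow_add ha0]; norm_num
  have hx2sq : x₂ * x₂ = b := by
    rw [hx2def, ← Real.rpow_add hb0]; norm_num
  have hinv1 : a ^ (-(1:ℝ)/2) = x₁⁻¹ := by
    rw [neg_div, Real.rpow_neg ha0.le, hx1def]
  have hinv2 : b ^ (-(1:ℝ)/2) = x₂⁻¹ := by
    rw [neg_div, Real.rpow_neg hb0.le, hx2def]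
  have harc1 : Real.arctan x₁⁻¹ = π/2 - Real.arctan x₁ := Real.arctan_inv_of_pos hx1
  have harc2 : Real.arctan x₂⁻¹ = π/2 - Real.arctan x₂ := Real.arctan_inv_of_pos hx2
  have e1 : Rc θb 1 ρ' = 1 / (1 + (θb / π) * x₁ * (Real.arctan x₁)) := by
    unfold Rc
    rw [div_one, ← hadef, hinv1, harc1, ← hx1def]
    ring_nf
  have e2 : Rc θb 2 ρ' = 1 / (1 + (θb / π) * x₂ * (π/2 + Real.arctan x₂)) := by
    unfold Rc
    rw [← hbdef, hinv2, harc2, ← hx2def]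
    ring_nf
  rw [e1, e2]
  have hc : 0 < θb / π := div_pos hθb hπ
  have harle : Real.arctan x₁ ≤ x₁ := arctan_le_self' hx1.le
  have harc2pos : 0 < Real.arctan x₂ := by
    have := Real.arctan_strictMono hx2
    simpa [Real.arctan_zero] using this
  have hx2ge : 2 * b ≤ x₂ := by
    nlinarith [mul_le_mul_of_nonneg_right hb14 hb0.le, sq_nonneg (x₂ - 2*b)]
  have h1 : x₁ * Real.arctan x₁ ≤ (9/4) * b := by
    have hm : x₁ * Real.arctan x₁ ≤ x₁ * x₁ :=
      mul_le_mul_of_nonneg_left harle hx1.le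
    nlinarith [mul_le_mul_of_nonneg_right hb14 hb0.le]
  have hkey : (θb / π) * x₁ * (Real.arctan x₁) <
      (θb / π) * x₂ * (π/2 + Real.arctan x₂) := by
    have h2 : π * b ≤ x₂ * (π/2) := by
      calc π * b = (2*b) * (π/2) := by ring
        _ ≤ x₂ * (π/2) := mul_le_mul_of_nonneg_right hx2ge (by positivity)
    have h3 : (9/4 : ℝ) * b < π * b := by
      have h9 : (9/4:ℝ) < π := by linarith [Real.pi_gt_three]
      exact (mul_lt_mul_of_pos_right h9 hb0)
    calc (θb / π) * x₁ * Real.arctan x₁ = (θb / π) * (x₁ * Real.arctan x₁) := by ring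
      _ < (θb / π) * (x₂ * (π/2 + Real.arctan x₂)) := by
          apply mul_lt_mul_of_pos_left _ hc
          have : x₂ * (π/2) < x₂ * (π/2 + Real.arctan x₂) :=
            mul_lt_mul_of_pos_left (by linarith) hx2
          linarith
      _ = (θb / π) * x₂ * (π/2 + Real.arctan x₂) := by ring
  have hD1 : 0 < 1 + (θb / π) * x₁ * (Real.arctan x₁) := by
    have : 0 ≤ (θb / π) * x₁ * Real.arctan x₁ :=
      mul_nonneg (mul_nonneg hc.le hx1.le) (arctan_nonneg' hx1.le)
    linarith
  exact one_div_lt_one_div_of_lt hD1 (by linarith)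
end
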